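/- arXiv:1501.02328 — 3 statements merged into one kernel-verified Lean document; each statement's English description precedes it below -/
import Mathlib

section
/- Let n ≥ 1 and consider the map π : Matrix (Fin n) (Fin n) ℂ → Herm(n) × ℂ defined by π(X) = (X X*, det X), where X* is the conjugate transpose. Then the fibres of π coincide exactly with the orbits of the right action of SU(n) given by X ↦ X C⁻¹ for C ∈ SU(n) (i.e. π(X) = π(Y) if and only if Y = X C for some C ∈ SU(n)). -/
/-!
If `X Xᴴ = Y Yᴴ`, the rows of `X` and of `Y` have the same Gram matrix, so the partial
isometry `Xᴴ u ↦ Yᴴ u` between the ranges of `Xᴴ` and `Yᴴ` extends to a unitary, giving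
`Y = X U` with `U` unitary. If `X` is invertible, `det X = det Y` forces `det U = 1`. If `X` is
singular, `det U` can be corrected to `1` without moving `X`: multiplying by the phase
`conj (det U)` on a line in the kernel of `X` is a unitary `W` with `X W = X`.
-/

open Matrix

/-- The map `π : X ↦ (X X*, det X)` into (Hermitian matrices) × ℂ. -/
noncomputable def piMap (n : ℕ) (X : Matrix (Fin n) (Fin n) ℂ) :
    {A : Matrix (Fin n) (Fin n) ℂ // A.IsHermitian} × ℂ :=
  (⟨X * Xᴴ, Matrix.isHermitian_mul_conjTranspose_self X⟩, X.det)

open scoped InnerProductSpace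

theorem IsStarProjection.one_add_smul_mem_unitary {𝕜 R : Type*} [CommRing 𝕜] [StarRing 𝕜]
    [Ring R] [StarRing R] [Algebra 𝕜 R] [StarModule 𝕜 R] {p : R} (hp : IsStarProjection p)
    {μ : 𝕜} (hμ : μ ∈ unitary 𝕜) : 1 + (μ - 1) • p ∈ unitary R := by
  have hμ' : star μ * μ = 1 := Unitary.star_mul_self_of_mem hμ
  have hstar : star (1 + (μ - 1) • p) = 1 + (star μ - 1) • p := by
    simp [star_smul, hp.isSelfAdjoint.star_eq]
  have h₁ : (star μ - 1) + (μ - 1) + (star μ - 1) * (μ - 1) = 0 := by linear_combination hμ'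
  have h₂ : (μ - 1) + (star μ - 1) + (μ - 1) * (star μ - 1) = 0 := by linear_combination hμ'
  have expand (a b : 𝕜) : (1 + a • p) * (1 + b • p) = 1 + (a + b + a * b) • p := by
    rw [add_mul, one_mul, mul_add, mul_one, smul_mul_smul_comm, hp.isIdempotentElem.eq,
      add_smul, add_smul]
    abel
  refine Unitary.mem_iff.mpr ⟨?_, ?_⟩ <;> rw [hstar, expand] <;>
    simp only [h₁, h₂, zero_smul, add_zero]

theorem LinearMap.exists_linearIsometry_comp_eq_of_inner_map_map_eq {𝕜 E V : Type*} [RCLike 𝕜]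
    [AddCommGroup E] [Module 𝕜 E] [NormedAddCommGroup V] [InnerProductSpace 𝕜 V]
    [FiniteDimensional 𝕜 V] (A B : E →ₗ[𝕜] V) (h : ∀ u v, ⟪A u, A v⟫_𝕜 = ⟪B u, B v⟫_𝕜) :
    ∃ L : V →ₗᵢ[𝕜] V, ∀ v, L (A v) = B v := by
  have hker : LinearMap.ker A ≤ LinearMap.ker B := fun v hv => by
    rw [LinearMap.mem_ker] at hv ⊢
    simpa [hv] using (h v v).symm
  let L₀ : LinearMap.range A →ₗ[𝕜] V :=
    (LinearMap.ker A).liftQ B hker ∘ₗ A.quotKerEquivRange.symm.toLinearMap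
  have hL₀ (v : E) : L₀ ⟨A v, LinearMap.mem_range_self A v⟩ = B v := by
    simp [L₀, LinearMap.quotKerEquivRange_symm_apply_image]
  have hL₀_inner : ∀ x y, ⟪L₀ x, L₀ y⟫_𝕜 = ⟪x, y⟫_𝕜 := by
    rintro ⟨-, u, rfl⟩ ⟨-, v, rfl⟩
    rw [hL₀, hL₀, Submodule.coe_inner, h]
  refine ⟨(L₀.isometryOfInner hL₀_inner).extend, fun v => ?_⟩
  rw [LinearIsometry.extend_apply (L₀.isometryOfInner hL₀_inner) ⟨A v, _⟩]
  exact hL₀ v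

theorem ContinuousLinearMap.exists_mem_unitary_eq_mul_of_star_mul_self_eq {𝕜 V : Type*} [RCLike 𝕜]
    [NormedAddCommGroup V] [InnerProductSpace 𝕜 V] [CompleteSpace V] [FiniteDimensional 𝕜 V]
    {T S : V →L[𝕜] V} (h : star T * T = star S * S) : ∃ U ∈ unitary (V →L[𝕜] V), S = U * T := by
  have hinner (u v : V) : ⟪T u, T v⟫_𝕜 = ⟪S u, S v⟫_𝕜 := by
    rw [← adjoint_inner_right, ← adjoint_inner_right S, ← star_eq_adjoint, ← star_eq_adjoint]
    exact congr(⟪u, $h v⟫_𝕜)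
  obtain ⟨L, hL⟩ := LinearMap.exists_linearIsometry_comp_eq_of_inner_map_map_eq
    (T : V →ₗ[𝕜] V) S hinner
  let e := L.toLinearIsometryEquiv rfl
  exact ⟨Unitary.linearIsometryEquiv.symm e, SetLike.coe_mem _, ext fun v => (hL v).symm⟩

namespace Matrix

open scoped ComplexOrder

variable {ι 𝕜 : Type*} [Fintype ι] [DecidableEq ι] [RCLike 𝕜]

theorem det_one_add_vecMulVec {R : Type*} [CommRing R] (u v : ι → R) :
    (1 + vecMulVec u v).det = 1 + v ⬝ᵥ u := by
  rw [vecMulVec_eq Unit, det_one_add_replicateCol_mul_replicateRow]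

theorem isStarProjection_inv_smul_vecMulVec_star {v : ι → 𝕜} (hv : v ≠ 0) :
    IsStarProjection ((star v ⬝ᵥ v)⁻¹ • vecMulVec v (star v)) := by
  have hc : star v ⬝ᵥ v ≠ 0 := fun h => hv (dotProduct_star_self_eq_zero.mp h)
  have hc_star : star (star v ⬝ᵥ v) = star v ⬝ᵥ v := (star_dotProduct v v).symm
  refine ⟨?_, ?_⟩
  · rw [IsIdempotentElem, smul_mul_smul_comm, vecMulVec_mul_vecMulVec, vecMulVec_smul, smul_smul,
      inv_mul_cancel_right₀ hc]
  · rw [IsSelfAdjoint, star_smul, star_inv₀, hc_star, star_eq_conjTranspose,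
      conjTranspose_vecMulVec, star_star]

theorem exists_mem_unitaryGroup_eq_mul_of_mul_conjTranspose_eq {X Y : Matrix ι ι 𝕜}
    (h : X * Xᴴ = Y * Yᴴ) : ∃ U ∈ unitaryGroup ι 𝕜, Y = X * U := by
  obtain ⟨U, hU, hYX⟩ := ContinuousLinearMap.exists_mem_unitary_eq_mul_of_star_mul_self_eq
    (T := toEuclideanCLM (𝕜 := 𝕜) Xᴴ) (S := toEuclideanCLM (𝕜 := 𝕜) Yᴴ) (by
      simpa only [← map_star, ← map_mul, star_eq_conjTranspose, conjTranspose_conjTranspose]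
        using congr(toEuclideanCLM (n := ι) (𝕜 := 𝕜) $h))
  set M := (toEuclideanCLM (n := ι) (𝕜 := 𝕜)).symm U
  have hYX' : Yᴴ = M * Xᴴ := by
    simpa [M] using congr((toEuclideanCLM (n := ι) (𝕜 := 𝕜)).symm $hYX)
  refine ⟨star M, Unitary.star_mem (Unitary.map_mem _ hU), ?_⟩
  simpa [star_eq_conjTranspose] using congr($hYX'ᴴ)

theorem exists_mem_unitaryGroup_det_eq_and_mul_eq_self {X : Matrix ι ι 𝕜} (hX : X.det = 0)
    {μ : 𝕜} (hμ : μ ∈ unitary 𝕜) : ∃ W ∈ unitaryGroup ι 𝕜, W.det = μ ∧ X * W = X := by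
  obtain ⟨v, hv, hXv⟩ := exists_mulVec_eq_zero_iff.mpr hX
  have hc : star v ⬝ᵥ v ≠ 0 := fun h => hv (dotProduct_star_self_eq_zero.mp h)
  refine ⟨1 + (μ - 1) • (star v ⬝ᵥ v)⁻¹ • vecMulVec v (star v),
    (isStarProjection_inv_smul_vecMulVec_star hv).one_add_smul_mem_unitary hμ, ?_, ?_⟩
  · rw [smul_smul, ← smul_vecMulVec, det_one_add_vecMulVec, dotProduct_smul, smul_eq_mul,
      inv_mul_cancel_right₀ hc]
    ring
  · rw [mul_add, mul_one, Matrix.mul_smul, Matrix.mul_smul, mul_vecMulVec, hXv, zero_vecMulVec,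
      smul_zero, smul_zero, add_zero]

theorem exists_mem_specialUnitaryGroup_eq_mul {X Y : Matrix ι ι 𝕜} (h : X * Xᴴ = Y * Yᴴ)
    (hdet : X.det = Y.det) : ∃ C ∈ specialUnitaryGroup ι 𝕜, Y = X * C := by
  obtain ⟨U, hU, rfl⟩ := exists_mem_unitaryGroup_eq_mul_of_mul_conjTranspose_eq h
  simp only [mem_specialUnitaryGroup_iff]
  by_cases hX : X.det = 0
  · obtain ⟨W, hW, hWdet, hXW⟩ :=
      exists_mem_unitaryGroup_det_eq_and_mul_eq_self hX (Unitary.star_mem (det_of_mem_unitary hU))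
    refine ⟨W * U, ⟨Submonoid.mul_mem _ hW hU, ?_⟩, by rw [← Matrix.mul_assoc, hXW]⟩
    rw [det_mul, hWdet, Unitary.star_mul_self_of_mem (det_of_mem_unitary hU)]
  · refine ⟨U, ⟨hU, ?_⟩, rfl⟩
    rw [det_mul, eq_comm, mul_eq_left₀ hX] at hdet
    exact hdet

theorem mul_conjTranspose_mul_eq_and_det_mul_eq {C : Matrix ι ι 𝕜}
    (hC : C ∈ specialUnitaryGroup ι 𝕜) (X : Matrix ι ι 𝕜) :
    X * C * (X * C)ᴴ = X * Xᴴ ∧ (X * C).det = X.det := by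
  rw [mem_specialUnitaryGroup_iff, mem_unitaryGroup_iff] at hC
  refine ⟨?_, by rw [det_mul, hC.2, mul_one]⟩
  rw [conjTranspose_mul, Matrix.mul_assoc, ← Matrix.mul_assoc C, ← star_eq_conjTranspose, hC.1,
    Matrix.one_mul]

end Matrix

theorem piMap_eq_piMap_iff {n : ℕ} {X Y : Matrix (Fin n) (Fin n) ℂ} :
    piMap n X = piMap n Y ↔ X * Xᴴ = Y * Yᴴ ∧ X.det = Y.det := by
  simp [piMap, Prod.ext_iff, Subtype.ext_iff]

theorem stmt2_general (n : ℕ) (X Y : Matrix (Fin n) (Fin n) ℂ) :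
    piMap n X = piMap n Y ↔
      ∃ C : Matrix (Fin n) (Fin n) ℂ, C * Cᴴ = 1 ∧ C.det = 1 ∧ Y = X * C := by
  have hSU (C : Matrix (Fin n) (Fin n) ℂ) :
      C ∈ specialUnitaryGroup (Fin n) ℂ ↔ C * Cᴴ = 1 ∧ C.det = 1 := by
    rw [mem_specialUnitaryGroup_iff, mem_unitaryGroup_iff, star_eq_conjTranspose]
  rw [piMap_eq_piMap_iff]
  constructor
  · rintro ⟨h, hdet⟩
    obtain ⟨C, hC, rfl⟩ := exists_mem_specialUnitaryGroup_eq_mul h hdet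
    obtain ⟨hCC, hCdet⟩ := (hSU C).mp hC
    exact ⟨C, hCC, hCdet, rfl⟩
  · rintro ⟨C, hCC, hdet, rfl⟩
    obtain ⟨h, hdet'⟩ := mul_conjTranspose_mul_eq_and_det_mul_eq ((hSU C).mpr ⟨hCC, hdet⟩) X
    exact ⟨h.symm, hdet'.symm⟩

/-- The fibres of `π(X) = (X X*, det X)` coincide with the orbits of the right action
`X ↦ X C⁻¹` of `SU(n)`. -/
theorem stmt2 (n : ℕ) (hn : 1 ≤ n) (X Y : Matrix (Fin n) (Fin n) ℂ) :
    piMap n X = piMap n Y ↔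
      ∃ C : Matrix (Fin n) (Fin n) ℂ, C * Cᴴ = 1 ∧ C.det = 1 ∧ Y = X * C :=
  stmt2_general n X Y
end

section
/- Let n ≥ 1. The image of the map π : Matrix (Fin n) (Fin n) ℂ → Herm(n) × ℂ, π(X) = (X X*, det X), is exactly the set M(n,ℂ) = {(A, λ) ∈ Herm(n) × ℂ : A is positive semidefinite and det A = |λ|²}. -/
/-!
If `A = X X*` then `A` is positive semidefinite and `det A = det X · conj (det X) = |det X|²`.
Conversely, a positive semidefinite `A` factors as `A = S S*`, so `|det S|² = det A = |λ|²` and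
`λ = u · det S` with `|u| = 1`. Replacing `S` by `S U` for a unitary `U` with `det U = u` (a diagonal
matrix with one entry `u`, the others `1`) leaves `S S*` unchanged and makes the determinant `λ`.
-/

open Matrix
open scoped ComplexOrder

theorem Complex.exists_norm_eq_one_mul_eq_of_norm_eq {a b : ℂ} (h : ‖a‖ = ‖b‖) :
    ∃ u : ℂ, ‖u‖ = 1 ∧ u * a = b := by
  rcases eq_or_ne a 0 with rfl | ha
  · exact ⟨1, norm_one, by rw [one_mul, eq_comm, ← norm_eq_zero, ← h, norm_zero]⟩
  · refine ⟨b / a, ?_, div_mul_cancel₀ b ha⟩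
    rw [norm_div, h, div_self (h ▸ norm_ne_zero_iff.mpr ha)]

namespace Matrix

variable {n : Type*} [Fintype n]

open scoped MatrixOrder in
theorem PosSemidef.exists_eq_mul_conjTranspose_self {𝕜 : Type*} [RCLike 𝕜] {A : Matrix n n 𝕜}
    (hA : A.PosSemidef) : ∃ X : Matrix n n 𝕜, A = X * Xᴴ := by
  classical
  exact CStarAlgebra.nonneg_iff_eq_mul_star_self.mp hA.nonneg

variable [DecidableEq n]

theorem exists_mem_unitaryGroup_det_eq [Nonempty n] {u : ℂ} (hu : ‖u‖ = 1) :
    ∃ U ∈ unitaryGroup n ℂ, U.det = u := by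
  let i : n := Classical.arbitrary n
  refine ⟨diagonal (Function.update 1 i u), ?_, ?_⟩
  · rw [mem_unitaryGroup_iff, star_eq_conjTranspose, diagonal_conjTranspose,
      diagonal_mul_diagonal, ← diagonal_one]
    congr 1
    ext j
    rcases eq_or_ne j i with rfl | hj
    · simp [Complex.mul_conj', hu]
    · simp [hj]
  · rw [det_diagonal, Finset.prod_update_of_mem (Finset.mem_univ i)]
    simp

theorem det_mul_conjTranspose_self (X : Matrix n n ℂ) :
    (X * Xᴴ).det = ((‖X.det‖ : ℝ) : ℂ) ^ 2 := by
  rw [det_mul, det_conjTranspose, Complex.star_def, Complex.mul_conj']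

theorem mul_mem_unitaryGroup_mul_conjTranspose {X U : Matrix n n ℂ} (hU : U ∈ unitaryGroup n ℂ) :
    (X * U) * (X * U)ᴴ = X * Xᴴ := by
  rw [conjTranspose_mul, mul_assoc, ← mul_assoc U, ← star_eq_conjTranspose U,
    mem_unitaryGroup_iff.mp hU, one_mul]

theorem exists_mul_conjTranspose_self_eq_and_det_eq [Nonempty n] {A : Matrix n n ℂ}
    (hA : A.PosSemidef) {d : ℂ} (hd : A.det = ((‖d‖ : ℝ) : ℂ) ^ 2) :
    ∃ Y : Matrix n n ℂ, Y * Yᴴ = A ∧ Y.det = d := by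
  obtain ⟨X, rfl⟩ := hA.exists_eq_mul_conjTranspose_self
  have hnorm : ‖X.det‖ = ‖d‖ := by
    rw [det_mul_conjTranspose_self] at hd
    exact (pow_left_inj₀ (norm_nonneg _) (norm_nonneg _) two_ne_zero).mp (by exact_mod_cast hd)
  obtain ⟨u, hu, rfl⟩ := Complex.exists_norm_eq_one_mul_eq_of_norm_eq hnorm
  obtain ⟨U, hU, rfl⟩ := exists_mem_unitaryGroup_det_eq (n := n) hu
  exact ⟨X * U, mul_mem_unitaryGroup_mul_conjTranspose hU, by rw [det_mul, mul_comm]⟩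

end Matrix

/-- The image of `π(X) = (X X*, det X)` is exactly
`M(n,ℂ) = {(A, λ) : A positive semidefinite, det A = |λ|²}`. -/
theorem stmt3 (n : ℕ) (hn : 1 ≤ n) :
    Set.range (piMap n) =
      {p : {A : Matrix (Fin n) (Fin n) ℂ // A.IsHermitian} × ℂ |
        (p.1 : Matrix (Fin n) (Fin n) ℂ).PosSemidef ∧
        (p.1 : Matrix (Fin n) (Fin n) ℂ).det = ((‖p.2‖ : ℝ) : ℂ) ^ 2} := by
  have : Nonempty (Fin n) := ⟨⟨0, hn⟩⟩
  ext ⟨⟨A, hAH⟩, d⟩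
  constructor
  · rintro ⟨X, hX⟩
    simp only [piMap, Prod.mk.injEq, Subtype.mk.injEq] at hX
    obtain ⟨rfl, rfl⟩ := hX
    exact ⟨posSemidef_self_mul_conjTranspose X, det_mul_conjTranspose_self X⟩
  · rintro ⟨hA, hdet⟩
    obtain ⟨Y, rfl, rfl⟩ := exists_mul_conjTranspose_self_eq_and_det_eq hA hdet
    exact ⟨Y, rfl⟩
end

section
/- Let n ≥ 1. The map from M(n,ℂ) = {(A, λ) ∈ Herm(n) × ℂ : A positive semidefinite, det A = |λ|²} to (Herm(n) / ℝ·I) × ℂ sending (A, λ) to (A + ℝ·I, λ) is a bijection, where A + ℝ·I denotes the image of A in the quotient of the real vector space Herm(n) by the line spanned by the identity matrix I. -/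
open Matrix
open scoped ComplexOrder

/-- The real vector space of complex Hermitian (self-adjoint) `n × n` matrices,
as a real submodule of the matrix space. -/
noncomputable abbrev HermSub (n : ℕ) : Submodule ℝ (Matrix (Fin n) (Fin n) ℂ) :=
  selfAdjoint.submodule ℝ (Matrix (Fin n) (Fin n) ℂ)

lemma one_mem_hermSub (n : ℕ) : (1 : Matrix (Fin n) (Fin n) ℂ) ∈ HermSub n :=
  IsSelfAdjoint.one _

lemma mulH_mem_hermSub {n m : ℕ} (X : Matrix (Fin n) (Fin m) ℂ) : X * Xᴴ ∈ HermSub n :=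
  Matrix.isHermitian_mul_conjTranspose_self X

lemma conj_mem_hermSub {n : ℕ} (C : Matrix (Fin n) (Fin n) ℂ) (A : HermSub n) :
    C * (A : Matrix (Fin n) (Fin n) ℂ) * Cᴴ ∈ HermSub n :=
  Matrix.isHermitian_mul_mul_conjTranspose C (A.2 : (A : Matrix (Fin n) (Fin n) ℂ).IsHermitian)

/-- The real line `ℝ·I` inside the space of Hermitian matrices. -/
noncomputable def lineI (n : ℕ) : Submodule ℝ (HermSub n) :=
  Submodule.span ℝ {(⟨1, one_mem_hermSub n⟩ : HermSub n)}

/-- `M(n,ℂ)`: pairs `(A, λ)` with `A` Hermitian positive semidefinite and `det A = |λ|²`. -/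
def MSet (n : ℕ) : Set (HermSub n × ℂ) :=
  {q | (q.1 : Matrix (Fin n) (Fin n) ℂ).PosSemidef ∧
    (q.1 : Matrix (Fin n) (Fin n) ℂ).det = (‖q.2‖ : ℂ) ^ 2}

/-! Shifting a Hermitian matrix by `t • 1` shifts its eigenvalues `μᵢ` by `t`. On the half-line
of `t` where the shift is positive semidefinite, `det = ∏ (μᵢ + t)` therefore increases strictly
(as `n ≥ 1`) and continuously from `0` to `∞`, so each coset `A + ℝ·I` contains exactly one
positive semidefinite matrix of any prescribed determinant `|λ|² ≥ 0`. -/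

namespace Matrix.IsHermitian
variable {n 𝕜 : Type*} [Fintype n] [DecidableEq n] [RCLike 𝕜] {A : Matrix n n 𝕜}

theorem add_smul_one_eq (hA : A.IsHermitian) (t : ℝ) :
    A + t • (1 : Matrix n n 𝕜) = Unitary.conjStarAlgAut 𝕜 _ hA.eigenvectorUnitary
      (diagonal fun i => ((hA.eigenvalues i + t : ℝ) : 𝕜)) := by
  conv_lhs => rw [hA.spectral_theorem, RCLike.real_smul_eq_coe_smul (K := 𝕜),
    ← map_one (Unitary.conjStarAlgAut 𝕜 _ hA.eigenvectorUnitary), ← map_smul, ← map_add,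
    smul_one_eq_diagonal, diagonal_add]
  simp

theorem posSemidef_add_smul_one_iff (hA : A.IsHermitian) (t : ℝ) :
    (A + t • (1 : Matrix n n 𝕜)).PosSemidef ↔ ∀ i, 0 ≤ hA.eigenvalues i + t := by
  rw [hA.add_smul_one_eq, Unitary.conjStarAlgAut_apply,
    Unitary.isUnit_coe.posSemidef_star_right_conjugate_iff, posSemidef_diagonal_iff]
  simp only [RCLike.ofReal_nonneg]

theorem det_add_smul_one (hA : A.IsHermitian) (t : ℝ) :
    (A + t • (1 : Matrix n n 𝕜)).det = ((∏ i, (hA.eigenvalues i + t) : ℝ) : 𝕜) := by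
  rw [hA.add_smul_one_eq, Unitary.conjStarAlgAut_apply, det_mul_right_comm,
    ← Unitary.coe_star, Unitary.coe_mul_star_self, one_mul, det_diagonal, RCLike.ofReal_prod]

end Matrix.IsHermitian

section ShiftedProduct

variable {ι : Type*} [Fintype ι] [Nonempty ι] (μ : ι → ℝ)

theorem strictMonoOn_prod_add :
    StrictMonoOn (fun t => ∏ i, (μ i + t)) {t | ∀ i, 0 ≤ μ i + t} := by
  intro s hs t _ hst
  dsimp only
  have hpos : 0 < ∏ i, (μ i + t) :=
    Finset.prod_pos fun i _ => by linarith [hs i]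
  obtain h0 | h0 := (Finset.prod_nonneg fun i _ => hs i).eq_or_lt
  · rwa [← h0]
  · refine Finset.prod_lt_prod_of_nonempty (fun i _ => (hs i).lt_of_ne' ?_)
      (fun i _ => by linarith) Finset.univ_nonempty
    exact Finset.prod_ne_zero_iff.mp h0.ne' i (Finset.mem_univ i)

theorem exists_prod_add_eq {c : ℝ} (hc : 0 ≤ c) :
    ∃ t, (∀ i, 0 ≤ μ i + t) ∧ ∏ i, (μ i + t) = c := by
  obtain ⟨i₀, -, hi₀⟩ := Finset.univ.exists_min_image μ Finset.univ_nonempty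
  have hmin (i : ι) : μ i₀ ≤ μ i := hi₀ i (Finset.mem_univ i)
  have hcont : Continuous fun t => ∏ i, (μ i + t) := by fun_prop
  have hlow : ∏ i, (μ i + -μ i₀) = 0 :=
    Finset.prod_eq_zero (Finset.mem_univ i₀) (add_neg_cancel _)
  have hhigh : c ≤ ∏ i, (μ i + (1 + c - μ i₀)) := calc
    c ≤ (1 + c) ^ Fintype.card ι := (le_add_of_nonneg_left zero_le_one).trans
      (le_self_pow₀ (by linarith) Fintype.card_ne_zero)
    _ = ∏ _i : ι, (1 + c) := by simp
    _ ≤ ∏ i, (μ i + (1 + c - μ i₀)) :=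
      Finset.prod_le_prod (fun _ _ => by linarith) (fun i _ => by linarith [hmin i])
  obtain ⟨t, ht, hct⟩ := intermediate_value_Icc (by linarith) hcont.continuousOn
    ⟨hlow.symm ▸ hc, hhigh⟩
  exact ⟨t, fun i => by linarith [hmin i, ht.1], hct⟩

end ShiftedProduct

theorem mk_eq_mk_iff_exists_eq_add_smul_one {n : ℕ} {A B : HermSub n} :
    (Submodule.Quotient.mk A : HermSub n ⧸ lineI n) = Submodule.Quotient.mk B ↔
      ∃ s : ℝ, (A : Matrix (Fin n) (Fin n) ℂ) = B + s • 1 := by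
  rw [Submodule.Quotient.eq, lineI, Submodule.mem_span_singleton]
  refine exists_congr fun s => ⟨fun h => ?_, fun h => Subtype.ext ?_⟩
  · rw [eq_sub_iff_add_eq] at h
    rw [← h, add_comm]
    rfl
  · simp [h]

/-- The map `M(n,ℂ) → (Herm(n)/ℝ·I) × ℂ`, `(A, λ) ↦ (A + ℝ·I, λ)`, is a bijection. -/
theorem stmt5 (n : ℕ) (hn : 1 ≤ n) :
    Function.Bijective (fun p : MSet n =>
      ((Submodule.Quotient.mk p.1.1 : HermSub n ⧸ lineI n), p.1.2)) := by
  have : Nonempty (Fin n) := ⟨⟨0, hn⟩⟩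
  refine ⟨?_, ?_⟩
  · rintro ⟨⟨A, a⟩, hA, hAdet⟩ ⟨⟨B, b⟩, hB, hBdet⟩ h
    obtain ⟨hAB, rfl⟩ := Prod.mk.inj h
    dsimp only at hA hAdet hB hBdet hAB
    obtain ⟨s, hs⟩ := mk_eq_mk_iff_exists_eq_add_smul_one.mp hAB
    have hBH := hB.isHermitian
    rw [hs, hBH.posSemidef_add_smul_one_iff] at hA
    have hdet : ∏ i, (hBH.eigenvalues i + s) = ∏ i, (hBH.eigenvalues i + 0) := by
      apply RCLike.ofReal_injective (K := ℂ)
      rw [← hBH.det_add_smul_one, ← hBH.det_add_smul_one, zero_smul, add_zero, ← hs,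
        hAdet, hBdet]
    have hs0 : s = 0 := (strictMonoOn_prod_add hBH.eigenvalues).injOn hA
      (fun i => by simpa using hB.eigenvalues_nonneg i) hdet
    exact Subtype.ext (Prod.ext (Subtype.ext (by simpa [hs0] using hs)) rfl)
  · rintro ⟨q, a⟩
    obtain ⟨B, rfl⟩ := Submodule.Quotient.mk_surjective _ q
    have hBH : (B : Matrix (Fin n) (Fin n) ℂ).IsHermitian := B.2
    obtain ⟨t, ht, hdet⟩ := exists_prod_add_eq hBH.eigenvalues (sq_nonneg ‖a‖)
    let A : HermSub n := ⟨B + t • 1, add_mem B.2 (Submodule.smul_mem _ t (one_mem_hermSub n))⟩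
    refine ⟨⟨(A, a), (hBH.posSemidef_add_smul_one_iff t).mpr ht, ?_⟩, ?_⟩
    · change (B + t • 1 : Matrix (Fin n) (Fin n) ℂ).det = _
      rw [hBH.det_add_smul_one, hdet]
      push_cast
      rfl
    · exact Prod.ext (mk_eq_mk_iff_exists_eq_add_smul_one.mpr ⟨t, rfl⟩) rfl
end
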